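/- arXiv:2307.11119 — 3 statements merged into one kernel-verified Lean document; each statement's English description precedes it below -/
import Mathlib

section
/- For a finite discounted MDP, there exists a deterministic stationary policy that is optimal: there is a function π : S → A such that for every state s, V_π(s) = max over all (possibly stochastic, stationary) policies π' of V_{π'}(s). -/
open Finset

/-- In a finite discounted MDP there exists a deterministic stationary policy that is
optimal: its value dominates, at every state, the value of every stochastic stationary
policy (hence it achieves the maximum, being itself such a policy). -/
theorem exists_optimal_deterministic_stationary_policy
    {S A : Type} [Fintype S] [Fintype A] [Nonempty S] [Nonempty A] [DecidableEq A]
    (P : S → A → S → ℝ) (hP0 : ∀ s a s', 0 ≤ P s a s')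
    (hP1 : ∀ s a, ∑ s', P s a s' = 1)
    (R : S → A → ℝ) (γ : ℝ) (hγ0 : 0 ≤ γ) (hγ1 : γ < 1)
    -- `Vof π` is the value function of the stochastic stationary policy π,
    -- i.e. the (unique) fixed point of its Bellman evaluation operator:
    (Vof : (S → A → ℝ) → (S → ℝ))
    (hVof : ∀ π : S → A → ℝ, (∀ s a, 0 ≤ π s a) → (∀ s, ∑ a, π s a = 1) →
      ∀ s, Vof π s = ∑ a, π s a * (R s a + γ * ∑ s', P s a s' * Vof π s')) :
    ∃ d : S → A, ∀ π : S → A → ℝ, (∀ s a, 0 ≤ π s a) → (∀ s, ∑ a, π s a = 1) →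
      ∀ s, Vof π s ≤ Vof (fun s' a => if a = d s' then 1 else 0) s := by
  classical
  have hAne : (univ : Finset A).Nonempty := univ_nonempty
  have hSne : (univ : Finset S).Nonempty := univ_nonempty
  set T : (S → ℝ) → S → ℝ :=
    fun V s => (univ : Finset A).sup' hAne (fun a => R s a + γ * ∑ s', P s a s' * V s')
    with hTdef
  -- a bound on expectations: if V ≤ W + M pointwise, then E[V] ≤ E[W] + M
  have sumle : ∀ (V W : S → ℝ) (M : ℝ), (∀ s', V s' ≤ W s' + M) → ∀ s a,
      ∑ s', P s a s' * V s' ≤ (∑ s', P s a s' * W s') + M := by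
    intro V W M h s a
    have h1 : ∑ s', P s a s' * V s' ≤ ∑ s', P s a s' * (W s' + M) :=
      Finset.sum_le_sum fun i _ => mul_le_mul_of_nonneg_left (h i) (hP0 s a i)
    calc ∑ s', P s a s' * V s' ≤ ∑ s', P s a s' * (W s' + M) := h1
      _ = (∑ s', P s a s' * W s') + M := by
          simp [mul_add, Finset.sum_add_distrib, ← Finset.sum_mul, hP1 s a]
  -- T is a γ-contraction
  set γnn : NNReal := ⟨γ, hγ0⟩ with hγnndef
  have hcoe : (γnn : ℝ) = γ := rfl
  have hgen : ∀ (V W : S → ℝ) (s : S), T V s ≤ T W s + γ * dist V W := by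
    intro V W s
    apply Finset.sup'_le
    intro a _
    have h1 : ∑ s', P s a s' * V s' ≤ (∑ s', P s a s' * W s') + dist V W := by
      apply sumle
      intro s'
      have h2 := dist_le_pi_dist V W s'
      rw [Real.dist_eq] at h2
      have h3 := (abs_sub_le_iff.mp h2).1
      linarith
    have h2 : R s a + γ * ∑ s', P s a s' * W s' ≤ T W s :=
      Finset.le_sup' (fun a => R s a + γ * ∑ s', P s a s' * W s') (Finset.mem_univ a)
    nlinarith [mul_le_mul_of_nonneg_left h1 hγ0]
  have hLip : LipschitzWith γnn T := by
    apply LipschitzWith.of_dist_le_mul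
    intro V W
    have hd0 : (0:ℝ) ≤ γ * dist V W := mul_nonneg hγ0 dist_nonneg
    rw [hcoe, dist_pi_le_iff hd0]
    intro s
    rw [Real.dist_eq, abs_sub_le_iff]
    constructor
    · have := hgen V W s; linarith
    · have := hgen W V s; rw [dist_comm] at this; linarith
  have hγnn1 : γnn < 1 := by
    rw [← NNReal.coe_lt_coe]; simpa [hcoe] using hγ1
  have hCon : ContractingWith γnn T := ⟨hγnn1, hLip⟩
  set Vstar : S → ℝ := ContractingWith.fixedPoint T hCon with hVstardef
  have hfix : T Vstar = Vstar := hCon.fixedPoint_isFixedPt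
  -- greedy action
  have hgreedy : ∀ s, ∃ a, T Vstar s = R s a + γ * ∑ s', P s a s' * Vstar s' := by
    intro s
    obtain ⟨a, _, ha⟩ := Finset.exists_mem_eq_sup' hAne
      (fun a => R s a + γ * ∑ s', P s a s' * Vstar s')
    exact ⟨a, ha⟩
  choose d hdd using hgreedy
  refine ⟨d, ?_⟩
  set πd : S → A → ℝ := fun s' a => if a = d s' then 1 else 0 with hπddef
  have hπd0 : ∀ s a, 0 ≤ πd s a := by intro s a; dsimp [πd]; split <;> norm_num
  have hπd1 : ∀ s, ∑ a, πd s a = 1 := by intro s; simp [πd]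
  set Vd : S → ℝ := Vof πd with hVddef
  have hVd : ∀ s, Vd s = R s (d s) + γ * ∑ s', P s (d s) s' * Vd s' := by
    intro s
    have := hVof πd hπd0 hπd1 s
    simpa [πd, ite_mul, Finset.sum_ite_eq'] using this
  -- V* ≤ Vd
  have hstar_le : ∀ s, Vstar s ≤ Vd s := by
    obtain ⟨s0, _, hs0⟩ := Finset.exists_mem_eq_sup' hSne (fun s => Vstar s - Vd s)
    set M : ℝ := (univ : Finset S).sup' hSne (fun s => Vstar s - Vd s) with hMdef
    have hle : ∀ s, Vstar s - Vd s ≤ M := fun s =>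
      Finset.le_sup' (fun s => Vstar s - Vd s) (Finset.mem_univ s)
    have h1 : Vstar s0 = R s0 (d s0) + γ * ∑ s', P s0 (d s0) s' * Vstar s' := by
      conv_lhs => rw [← hfix]
      exact hdd s0
    have h2 := hVd s0
    have h3 : ∑ s', P s0 (d s0) s' * Vstar s' ≤ (∑ s', P s0 (d s0) s' * Vd s') + M := by
      apply sumle
      intro s'; have := hle s'; linarith
    have hMle : M ≤ γ * M := by
      have := mul_le_mul_of_nonneg_left h3 hγ0
      have hM : M = Vstar s0 - Vd s0 := hs0
      nlinarith
    have hM0 : M ≤ 0 := by nlinarith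
    intro s; have := hle s; linarith
  -- Vof π ≤ V* for every stochastic stationary policy π
  intro π hπ0 hπ1 s
  have hpi_le : ∀ s, Vof π s ≤ Vstar s := by
    obtain ⟨s0, _, hs0⟩ := Finset.exists_mem_eq_sup' hSne (fun s => Vof π s - Vstar s)
    set M : ℝ := (univ : Finset S).sup' hSne (fun s => Vof π s - Vstar s) with hMdef
    have hle : ∀ s, Vof π s - Vstar s ≤ M := fun s =>
      Finset.le_sup' (fun s => Vof π s - Vstar s) (Finset.mem_univ s)
    have h1 := hVof π hπ0 hπ1 s0
    have h2 : ∀ a, R s0 a + γ * ∑ s', P s0 a s' * Vof π s' ≤ Vstar s0 + γ * M := by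
      intro a
      have h3 : ∑ s', P s0 a s' * Vof π s' ≤ (∑ s', P s0 a s' * Vstar s') + M := by
        apply sumle; intro s'; have := hle s'; linarith
      have h4 : R s0 a + γ * ∑ s', P s0 a s' * Vstar s' ≤ T Vstar s0 :=
        Finset.le_sup' (fun a => R s0 a + γ * ∑ s', P s0 a s' * Vstar s') (Finset.mem_univ a)
      have h5 : T Vstar s0 = Vstar s0 := congrFun hfix s0
      nlinarith [mul_le_mul_of_nonneg_left h3 hγ0]
    have h6 : Vof π s0 ≤ Vstar s0 + γ * M := by
      calc Vof π s0 = ∑ a, π s0 a * (R s0 a + γ * ∑ s', P s0 a s' * Vof π s') := h1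
        _ ≤ ∑ a, π s0 a * (Vstar s0 + γ * M) :=
            Finset.sum_le_sum fun a _ => mul_le_mul_of_nonneg_left (h2 a) (hπ0 s0 a)
        _ = Vstar s0 + γ * M := by rw [← Finset.sum_mul, hπ1 s0, one_mul]
    have hMle : M ≤ γ * M := by
      have hM : M = Vof π s0 - Vstar s0 := hs0
      linarith
    have hM0 : M ≤ 0 := by nlinarith
    intro s; have := hle s; linarith
  calc Vof π s ≤ Vstar s := hpi_le s
    _ ≤ Vd s := hstar_le s
end

section
/- Deterministic synchronous Q-learning converges: if Qₙ₊₁ = (1 − βₙ) Qₙ + βₙ T Qₙ pointwise, where T is a γ-contraction on (the sup-normed space of) Q-functions with fixed point Q*, and the learning rates satisfy 0 ≤ βₙ ≤ 1 and Σ βₙ = ∞, then ‖Qₙ − Q*‖_∞ → 0. -/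
open Filter

/-- Deterministic synchronous Q-learning converges: if `T` is a γ-contraction in sup
norm with fixed point `Q*`, learning rates `βₙ ∈ [0,1]` have divergent sum, and
`Qₙ₊₁ = (1 - βₙ) Qₙ + βₙ T Qₙ` pointwise, then `‖Qₙ - Q*‖ → 0`. -/
theorem deterministic_q_learning_convergence
    {S A : Type} [Fintype S] [Fintype A] [Nonempty S] [Nonempty A]
    (γ : ℝ) (hγ0 : 0 ≤ γ) (hγ1 : γ < 1)
    (T : (S × A → ℝ) → (S × A → ℝ))
    (hT : ∀ Q₁ Q₂, ‖T Q₁ - T Q₂‖ ≤ γ * ‖Q₁ - Q₂‖)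
    (Qstar : S × A → ℝ) (hfix : T Qstar = Qstar)
    (β : ℕ → ℝ) (hβ0 : ∀ n, 0 ≤ β n) (hβ1 : ∀ n, β n ≤ 1)
    (hdiv : Tendsto (fun N => ∑ n ∈ Finset.range N, β n) atTop atTop)
    (Q : ℕ → (S × A → ℝ))
    (hrec : ∀ n x, Q (n + 1) x = (1 - β n) * Q n x + β n * T (Q n) x) :
    Tendsto (fun n => ‖Q n - Qstar‖) atTop (nhds 0) := by
  set c : ℝ := 1 - γ with hc
  have hc0 : 0 < c := by simp [hc]; linarith
  have hstep : ∀ n, ‖Q (n + 1) - Qstar‖ ≤ (1 - c * β n) * ‖Q n - Qstar‖ := by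
    intro n
    have heq : Q (n + 1) - Qstar
        = (1 - β n) • (Q n - Qstar) + (β n) • (T (Q n) - Qstar) := by
      funext x
      simp only [Pi.sub_apply, Pi.add_apply, Pi.smul_apply, smul_eq_mul, hrec n x]
      ring
    have h1 : ‖(1 - β n) • (Q n - Qstar)‖ = (1 - β n) * ‖Q n - Qstar‖ := by
      rw [norm_smul, Real.norm_eq_abs, abs_of_nonneg (by linarith [hβ1 n])]
    have h2 : ‖(β n) • (T (Q n) - Qstar)‖ ≤ β n * (γ * ‖Q n - Qstar‖) := by
      rw [norm_smul, Real.norm_eq_abs, abs_of_nonneg (hβ0 n)]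
      have h := hT (Q n) Qstar
      rw [hfix] at h
      exact mul_le_mul_of_nonneg_left h (hβ0 n)
    calc ‖Q (n + 1) - Qstar‖
        ≤ ‖(1 - β n) • (Q n - Qstar)‖ + ‖(β n) • (T (Q n) - Qstar)‖ := by
          rw [heq]; exact norm_add_le _ _
      _ ≤ (1 - β n) * ‖Q n - Qstar‖ + β n * (γ * ‖Q n - Qstar‖) := by
          rw [h1]; linarith
      _ = (1 - c * β n) * ‖Q n - Qstar‖ := by simp [hc]; ring
  have hbound : ∀ n, ‖Q n - Qstar‖
      ≤ ‖Q 0 - Qstar‖ * Real.exp (-c * ∑ k ∈ Finset.range n, β k) := by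
    intro n
    induction n with
    | zero => simp
    | succ n ih =>
      have hexp : 1 - c * β n ≤ Real.exp (-c * β n) := by
        have := Real.add_one_le_exp (-c * β n)
        linarith
      calc ‖Q (n + 1) - Qstar‖ ≤ (1 - c * β n) * ‖Q n - Qstar‖ := hstep n
        _ ≤ Real.exp (-c * β n) *
            (‖Q 0 - Qstar‖ * Real.exp (-c * ∑ k ∈ Finset.range n, β k)) :=
          mul_le_mul hexp ih (norm_nonneg _) (Real.exp_nonneg _)
        _ = ‖Q 0 - Qstar‖ * Real.exp (-c * ∑ k ∈ Finset.range (n + 1), β k) := by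
          rw [Finset.sum_range_succ, mul_add, Real.exp_add]; ring
  have hS : Tendsto (fun n => -c * ∑ k ∈ Finset.range n, β k) atTop atBot := by
    have h1 : Tendsto (fun n => c * ∑ k ∈ Finset.range n, β k) atTop atTop :=
      hdiv.const_mul_atTop hc0
    have h2 : Tendsto (fun n => -(c * ∑ k ∈ Finset.range n, β k)) atTop atBot :=
      tendsto_neg_atBot_iff.mpr h1
    simpa [neg_mul] using h2
  have hlim : Tendsto (fun n => ‖Q 0 - Qstar‖ *
      Real.exp (-c * ∑ k ∈ Finset.range n, β k)) atTop (nhds 0) := by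
    have := (Real.tendsto_exp_atBot.comp hS).const_mul ‖Q 0 - Qstar‖
    simpa using this
  exact squeeze_zero (fun n => norm_nonneg _) hbound hlim
end

section
/- Suboptimality of the greedy policy: if π is greedy with respect to some V : S → ℝ (i.e., π(s) ∈ argmax_a [R(s,a) + γ Σ_{s'} P(s'|s,a) V(s')]), then ‖V_π − V*‖_∞ ≤ 2γ/(1−γ) · ‖V − V*‖_∞. -/
open Finset

/-- Suboptimality of the greedy policy: if π is greedy with respect to `V`, then
`‖V_π - V*‖ ≤ 2γ/(1-γ) · ‖V - V*‖`. -/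
theorem greedy_policy_suboptimality
    {S A : Type} [Fintype S] [Fintype A] [Nonempty S] [Nonempty A]
    (P : S → A → S → ℝ) (hP0 : ∀ s a s', 0 ≤ P s a s')
    (hP1 : ∀ s a, ∑ s', P s a s' = 1)
    (R : S → A → ℝ) (γ : ℝ) (hγ0 : 0 ≤ γ) (hγ1 : γ < 1)
    (V : S → ℝ) (π : S → A)
    (hgreedy : ∀ s a, R s a + γ * ∑ s', P s a s' * V s' ≤
      R s (π s) + γ * ∑ s', P s (π s) s' * V s')
    (Vstar : S → ℝ)
    (hVstar : ∀ s, Vstar s =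
      univ.sup' univ_nonempty fun a => R s a + γ * ∑ s', P s a s' * Vstar s')
    (Vπ : S → ℝ)
    (hVπ : ∀ s, Vπ s = R s (π s) + γ * ∑ s', P s (π s) s' * Vπ s') :
    ‖Vπ - Vstar‖ ≤ 2 * γ / (1 - γ) * ‖V - Vstar‖ := by
  set D := ‖Vπ - Vstar‖ with hD
  set E := ‖V - Vstar‖ with hE
  have hE0 : 0 ≤ E := norm_nonneg _
  have hD0 : 0 ≤ D := norm_nonneg _
  have hVE : ∀ s', |V s' - Vstar s'| ≤ E := fun s' => by
    simpa [Real.norm_eq_abs] using norm_le_pi_norm (V - Vstar) s'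
  have hπE : ∀ s', |Vπ s' - Vstar s'| ≤ D := fun s' => by
    simpa [Real.norm_eq_abs] using norm_le_pi_norm (Vπ - Vstar) s'
  have h1γ : 0 < 1 - γ := by linarith
  -- sums bound
  have hsum : ∀ s a, |∑ s', P s a s' * Vπ s' - ∑ s', P s a s' * Vstar s'| ≤ D := by
    intro s a
    rw [← Finset.sum_sub_distrib]
    calc |∑ s', (P s a s' * Vπ s' - P s a s' * Vstar s')|
        ≤ ∑ s', |P s a s' * Vπ s' - P s a s' * Vstar s'| := Finset.abs_sum_le_sum_abs _ _
      _ ≤ ∑ s', P s a s' * D := by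
          apply Finset.sum_le_sum; intro s' _
          rw [← mul_sub, abs_mul, abs_of_nonneg (hP0 s a s')]
          exact mul_le_mul_of_nonneg_left (hπE s') (hP0 s a s')
      _ = D := by rw [← Finset.sum_mul, hP1, one_mul]
  -- key : Vstar s ≤ Bπ Vstar s + 2γE
  have key : ∀ s, Vstar s ≤ R s (π s) + γ * ∑ s', P s (π s) s' * Vstar s' + 2 * γ * E := by
    intro s
    rw [hVstar s]
    apply Finset.sup'_le
    intro a _
    have hsumVE : ∀ b, ∑ s', P s b s' * Vstar s' ≤ ∑ s', P s b s' * V s' + E := by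
      intro b
      have : ∑ s', P s b s' * Vstar s' ≤ ∑ s', P s b s' * (V s' + E) := by
        apply Finset.sum_le_sum; intro s' _
        apply mul_le_mul_of_nonneg_left _ (hP0 s b s')
        have := (abs_le.mp (hVE s')).1
        linarith
      calc ∑ s', P s b s' * Vstar s' ≤ ∑ s', P s b s' * (V s' + E) := this
        _ = ∑ s', P s b s' * V s' + E := by
            simp [mul_add, Finset.sum_add_distrib, ← Finset.sum_mul, hP1]
    have hsumEV : ∑ s', P s (π s) s' * V s' ≤ ∑ s', P s (π s) s' * Vstar s' + E := by
      have : ∑ s', P s (π s) s' * V s' ≤ ∑ s', P s (π s) s' * (Vstar s' + E) := by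
        apply Finset.sum_le_sum; intro s' _
        apply mul_le_mul_of_nonneg_left _ (hP0 s (π s) s')
        have := (abs_le.mp (hVE s')).2
        linarith
      calc ∑ s', P s (π s) s' * V s' ≤ ∑ s', P s (π s) s' * (Vstar s' + E) := this
        _ = ∑ s', P s (π s) s' * Vstar s' + E := by
            simp [mul_add, Finset.sum_add_distrib, ← Finset.sum_mul, hP1]
    have hg := hgreedy s a
    have h1 := hsumVE a
    nlinarith [mul_le_mul_of_nonneg_left h1 hγ0, mul_le_mul_of_nonneg_left hsumEV hγ0]
  -- Bπ Vstar ≤ Vstar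
  have hBle : ∀ s, R s (π s) + γ * ∑ s', P s (π s) s' * Vstar s' ≤ Vstar s := by
    intro s
    rw [hVstar s]
    exact Finset.le_sup' (f := fun a => R s a + γ * ∑ s', P s a s' * Vstar s')
      (Finset.mem_univ (π s))
  -- pointwise bound
  have hpt : ∀ s, |Vπ s - Vstar s| ≤ γ * D + 2 * γ * E := by
    intro s
    have hs := hsum s (π s)
    have h1 := (abs_le.mp hs).1
    have h2 := (abs_le.mp hs).2
    have hv := hVπ s
    have hk := key s
    have hb := hBle s
    rw [abs_le]
    constructor
    · nlinarith
    · nlinarith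
  have hDle : D ≤ γ * D + 2 * γ * E := by
    rw [hD]
    apply pi_norm_le_iff_of_nonneg (by positivity) |>.mpr
    intro s
    simpa [Real.norm_eq_abs] using hpt s
  rw [div_mul_eq_mul_div, le_div_iff₀ h1γ]
  nlinarith
end
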